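/- Let K be a simplicial complex of dimension d−1 with n vertices such that all minimal non-faces of K have exactly two vertices, except for at most one minimal non-face, which may have any number of vertices. Then K satisfies the Taylor upper bound: f_{d−1}(K) ≤ (∏_{i=1}^{n−d} M̃_i(K))/(n−d)!. -/

import Mathlib

/-!
The facets of `K` of maximal size are the complements of the minimum transversals of the family
`E` of minimal non-faces, and `n - d` is the transversal number `τ` of `E`; so it suffices to show
`#(minimum transversals) · τ! ≤ ∏_{i ≤ τ} M̃_i`. The minimum transversals through a vertex `v` are
those of the edges avoiding `v`, with `v` added back, and that family has transversal number
`τ - 1`. Counting pairs (vertex, minimum transversal through it) therefore gives the bound by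
induction on `τ`, once the union of all minimum transversals is covered by `τ` edges.

For this, fix a minimum transversal `C`. Exchanging a set `S` of vertices outside `C` for its
neighbours in `C` inside a second minimum transversal shows that the vertices outside `C` lying
only in pair edges satisfy Hall's condition towards `C`. Matching them into `C` and adding one
edge through each unmatched vertex of `C` uses `|C| = τ` edges. If a vertex outside `C` lies in
the exceptional edge, that edge is matched to a vertex of `C` too, which is possible when `C`
meets the exceptional edge in as many vertices as any minimum transversal does.
-/

open Finset

/-- A simplicial complex on a finite vertex set: a collection of finite subsets
(faces) of the vertex set, closed under inclusion, containing every singleton. -/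
structure SC (α : Type*) [DecidableEq α] where
  verts : Finset α
  faces : Finset (Finset α)
  subset_verts : ∀ F ∈ faces, F ⊆ verts
  down_closed : ∀ F ∈ faces, ∀ G, G ⊆ F → G ∈ faces
  singleton_mem : ∀ v ∈ verts, {v} ∈ faces

namespace SC

variable {α : Type*} [DecidableEq α]

/-- `dimP1 K = dim K + 1`: the maximal number of vertices of a face. -/
def dimP1 (K : SC α) : ℕ := K.faces.sup Finset.card

/-- The number of faces with exactly `j` vertices, i.e. `f_{j-1}(K)`. -/
def fCard (K : SC α) (j : ℕ) : ℕ := (K.faces.filter (fun F => F.card = j)).card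

/-- The minimal non-faces of `K`: subsets of the vertex set which are not faces,
all of whose proper subsets are faces. -/
def minNonFaces (K : SC α) : Finset (Finset α) :=
  K.verts.powerset.filter (fun F => F ∉ K.faces ∧ ∀ G ∈ F.powerset, G ≠ F → G ∈ K.faces)

/-- The `i`-th minimal Taylor shift `m̃_i(K)`: the minimal number of vertices covered by
a set of exactly `i` minimal non-faces of `K`. -/
noncomputable def mT (K : SC α) (i : ℕ) : ℕ :=
  sInf {n | ∃ T ⊆ K.minNonFaces, T.card = i ∧ (T.sup id).card = n}

/-- The `i`-th maximal Taylor shift `M̃_i(K)`: the maximal number of vertices covered by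
a set of exactly `i` minimal non-faces of `K`. -/
noncomputable def MT (K : SC α) (i : ℕ) : ℕ :=
  sSup {n | ∃ T ⊆ K.minNonFaces, T.card = i ∧ (T.sup id).card = n}

/-- The conjectured Taylor upper bound `(∏_{i=1}^{n-d} M̃_i(K))/(n-d)!` on `f_{d-1}(K)`. -/
noncomputable def taylorUBval (K : SC α) : ℚ :=
  (∏ i ∈ Finset.Icc 1 (K.verts.card - K.dimP1), (K.MT i : ℚ)) /
    (Nat.factorial (K.verts.card - K.dimP1))

/-- The conjectured Taylor lower bound `(∏_{i=1}^{n-d} m̃_i(K))/(n-d)!` on `f_{d-1}(K)`. -/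
noncomputable def taylorLBval (K : SC α) : ℚ :=
  (∏ i ∈ Finset.Icc 1 (K.verts.card - K.dimP1), (K.mT i : ℚ)) /
    (Nat.factorial (K.verts.card - K.dimP1))

/-- `K` satisfies the Taylor upper bound: `f_{d-1}(K) ≤ (∏_{i=1}^{n-d} M̃_i(K))/(n-d)!`. -/
def TaylorUB (K : SC α) : Prop := (K.fCard K.dimP1 : ℚ) ≤ K.taylorUBval

/-- `K` satisfies the Taylor lower bound: `f_{d-1}(K) ≥ (∏_{i=1}^{n-d} m̃_i(K))/(n-d)!`. -/
def TaylorLB (K : SC α) : Prop := K.taylorLBval ≤ (K.fCard K.dimP1 : ℚ)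

/-- The induced subcomplex `K[W]`: the faces of `K` contained in `W`. -/
def induced (K : SC α) (W : Finset α) : SC α where
  verts := K.verts ∩ W
  faces := K.faces.filter (fun F => F ⊆ W)
  subset_verts := by
    intro F hF
    simp only [mem_filter] at hF
    exact subset_inter (K.subset_verts F hF.1) hF.2
  down_closed := by
    intro F hF G hG
    simp only [mem_filter] at hF ⊢
    exact ⟨K.down_closed F hF.1 G hG, hG.trans hF.2⟩
  singleton_mem := by
    intro v hv
    simp only [mem_inter] at hv
    simp only [mem_filter, singleton_subset_iff]
    exact ⟨K.singleton_mem v hv.1, hv.2⟩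

end SC

open scoped Nat

namespace Finset

variable {α : Type*} [DecidableEq α] {E T : Finset (Finset α)} {C C' S : Finset α} {c v z : α}

def IsTransversal (E : Finset (Finset α)) (C : Finset α) : Prop := ∀ e ∈ E, (e ∩ C).Nonempty

instance (E : Finset (Finset α)) (C : Finset α) : Decidable (E.IsTransversal C) :=
  inferInstanceAs (Decidable (∀ e ∈ E, (e ∩ C).Nonempty))

/-- This is `0` when `E` has no transversal, i.e. when `∅ ∈ E`. -/
noncomputable def transversalNumber (E : Finset (Finset α)) : ℕ :=
  sInf {k | ∃ C, E.IsTransversal C ∧ C.card = k}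

noncomputable def minTransversals (E : Finset (Finset α)) : Finset (Finset α) :=
  {C ∈ (E.sup id).powerset | E.IsTransversal C ∧ C.card = E.transversalNumber}

noncomputable def maxUnionCard (E : Finset (Finset α)) (i : ℕ) : ℕ :=
  sSup {n | ∃ T ⊆ E, T.card = i ∧ (T.sup id).card = n}

theorem transversalNumber_le (h : E.IsTransversal C) : E.transversalNumber ≤ C.card :=
  Nat.sInf_le ⟨C, h, rfl⟩

theorem exists_inter_eq_singleton_of_card_le (hC : E.IsTransversal C)
    (hcard : C.card ≤ E.transversalNumber) (hc : c ∈ C) : ∃ e ∈ E, e ∩ C = {c} := by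
  have hnot : ¬ E.IsTransversal (C.erase c) := fun h => by
    have := transversalNumber_le h
    rw [card_erase_of_mem hc] at this
    have := card_pos.2 ⟨c, hc⟩
    omega
  simp only [IsTransversal, not_forall, not_nonempty_iff_eq_empty] at hnot
  obtain ⟨e, he, hempty⟩ := hnot
  rw [inter_erase, erase_eq_empty_iff] at hempty
  exact ⟨e, he, hempty.resolve_left (hC e he).ne_empty⟩

theorem mem_minTransversals :
    C ∈ E.minTransversals ↔ E.IsTransversal C ∧ C.card = E.transversalNumber := by
  refine ⟨fun h => (mem_filter.1 h).2, fun ⟨hC, hcard⟩ => mem_filter.2 ⟨?_, hC, hcard⟩⟩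
  rw [mem_powerset]
  intro c hc
  obtain ⟨e, he, hec⟩ := exists_inter_eq_singleton_of_card_le hC hcard.le hc
  exact mem_sup.2 ⟨e, he, (mem_inter.1 (hec ▸ mem_singleton_self c)).1⟩

theorem subset_sup_of_mem_minTransversals (hC : C ∈ E.minTransversals) : C ⊆ E.sup id :=
  mem_powerset.1 (mem_filter.1 hC).1

theorem exists_inter_eq_singleton (hC : C ∈ E.minTransversals) (hc : c ∈ C) :
    ∃ e ∈ E, e ∩ C = {c} :=
  exists_inter_eq_singleton_of_card_le (mem_minTransversals.1 hC).1
    (mem_minTransversals.1 hC).2.le hc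

theorem minTransversals_nonempty (h : E.IsTransversal C) : E.minTransversals.Nonempty := by
  obtain ⟨C₀, hC₀, hcard⟩ :=
    Nat.sInf_mem (s := {k | ∃ C, E.IsTransversal C ∧ C.card = k}) ⟨C.card, C, h, rfl⟩
  exact ⟨C₀, mem_minTransversals.2 ⟨hC₀, hcard⟩⟩

theorem transversalNumber_le_card (hC : C ∈ E.minTransversals) :
    E.transversalNumber ≤ E.card := by
  choose! p hpE hpC using fun c (hc : c ∈ C) => exists_inter_eq_singleton hC hc
  rw [← (mem_minTransversals.1 hC).2]
  refine card_le_card_of_injOn p (fun c hc => hpE c hc) fun c hc c' hc' hcc' => ?_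
  simpa [hcc', hpC c' hc', eq_comm] using hpC c hc

theorem card_minTransversals_mul_transversalNumber :
    E.minTransversals.card * E.transversalNumber =
      ∑ v ∈ E.minTransversals.sup id, {C ∈ E.minTransversals | v ∈ C}.card := by
  have hdouble := sum_card_bipartiteAbove_eq_sum_card_bipartiteBelow
    (s := E.minTransversals.sup id) (t := E.minTransversals) (r := fun v C => v ∈ C)
  simp only [bipartiteAbove, bipartiteBelow] at hdouble
  rw [hdouble, ← smul_eq_mul, ← sum_const]
  refine sum_congr rfl fun C hC => ?_
  have hCZ : C ⊆ E.minTransversals.sup id := le_sup (f := id) hC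
  rw [filter_mem_eq_inter, inter_eq_right.2 hCZ, (mem_minTransversals.1 hC).2]

theorem IsTransversal.erase (h : E.IsTransversal C) (v : α) :
    {e ∈ E | v ∉ e}.IsTransversal (C.erase v) := by
  intro e he
  rw [mem_filter] at he
  rw [inter_erase, erase_eq_of_notMem fun hv => he.2 (mem_inter.1 hv).1]
  exact h e he.1

theorem IsTransversal.insert (h : {e ∈ E | v ∉ e}.IsTransversal C) :
    E.IsTransversal (insert v C) := by
  intro e he
  by_cases hve : v ∈ e
  · exact ⟨v, mem_inter.2 ⟨hve, mem_insert_self v C⟩⟩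
  · exact (h e (mem_filter.2 ⟨he, hve⟩)).mono (inter_subset_inter_left (subset_insert v C))

theorem transversalNumber_filter_notMem_add_one (hC : C ∈ E.minTransversals) (hv : v ∈ C) :
    {e ∈ E | v ∉ e}.transversalNumber + 1 = E.transversalNumber := by
  obtain ⟨hCt, hcard⟩ := mem_minTransversals.1 hC
  have hle := transversalNumber_le (hCt.erase v)
  rw [card_erase_of_mem hv, hcard] at hle
  obtain ⟨C₀, hC₀⟩ := minTransversals_nonempty (hCt.erase v)
  obtain ⟨hC₀t, hC₀card⟩ := mem_minTransversals.1 hC₀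
  have hge := (transversalNumber_le hC₀t.insert).trans (card_insert_le v C₀)
  have hpos : 0 < C.card := card_pos.2 ⟨v, hv⟩
  omega

theorem notMem_of_mem_minTransversals_filter_notMem
    (hC : C ∈ {e ∈ E | v ∉ e}.minTransversals) : v ∉ C := fun hv => by
  obtain ⟨e, he, hve⟩ := mem_sup.1 (subset_sup_of_mem_minTransversals hC hv)
  exact (mem_filter.1 he).2 hve

theorem card_filter_mem_minTransversals (hC : C ∈ E.minTransversals) (hv : v ∈ C) :
    {C ∈ E.minTransversals | v ∈ C}.card = {e ∈ E | v ∉ e}.minTransversals.card := by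
  have hτ := transversalNumber_filter_notMem_add_one hC hv
  refine card_nbij' (·.erase v) (insert v) (fun C' hC' => ?_) (fun C' hC' => ?_)
    (fun C' hC' => insert_erase (mem_filter.1 hC').2)
    (fun C' hC' => erase_insert (notMem_of_mem_minTransversals_filter_notMem hC'))
  · obtain ⟨hC'm, hvC'⟩ := mem_filter.1 hC'
    obtain ⟨hC't, hC'card⟩ := mem_minTransversals.1 hC'm
    refine mem_minTransversals.2 ⟨hC't.erase v, ?_⟩
    rw [card_erase_of_mem hvC']
    omega
  · have hvC' := notMem_of_mem_minTransversals_filter_notMem hC'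
    obtain ⟨hC't, hC'card⟩ := mem_minTransversals.1 hC'
    refine mem_filter.2 ⟨mem_minTransversals.2 ⟨hC't.insert, ?_⟩, mem_insert_self v C'⟩
    rw [card_insert_of_notMem hvC']
    omega

theorem bddAbove_unionCards (E : Finset (Finset α)) (i : ℕ) :
    BddAbove {n | ∃ T ⊆ E, T.card = i ∧ (T.sup id).card = n} :=
  ⟨(E.sup id).card, fun _ ⟨_, hT, _, hn⟩ => hn ▸ card_le_card (sup_mono hT)⟩

theorem card_sup_le_maxUnionCard (hT : T ⊆ E) :
    (T.sup id).card ≤ E.maxUnionCard T.card :=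
  le_csSup (bddAbove_unionCards E _) ⟨T, hT, rfl, rfl⟩

theorem maxUnionCard_mono {E' : Finset (Finset α)} (h : E' ⊆ E) (i : ℕ) :
    E'.maxUnionCard i ≤ E.maxUnionCard i := by
  rcases Set.eq_empty_or_nonempty {n | ∃ T ⊆ E', T.card = i ∧ (T.sup id).card = n} with
    hempty | hne
  · simp [maxUnionCard, hempty]
  · obtain ⟨T, hT, rfl, hn⟩ := Nat.sSup_mem hne (bddAbove_unionCards E' i)
    rw [maxUnionCard, ← hn]
    exact card_sup_le_maxUnionCard (hT.trans h)

theorem card_sup_le_maxUnionCard_of_card_le (hT : T ⊆ E) {i : ℕ}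
    (hTi : T.card ≤ i) (hiE : i ≤ E.card) : (T.sup id).card ≤ E.maxUnionCard i := by
  obtain ⟨T', hTT', hT'E, rfl⟩ := exists_subsuperset_card_eq hT hTi hiE
  exact (card_le_card (sup_mono hTT')).trans (card_sup_le_maxUnionCard hT'E)

def pairNeighbors (E : Finset (Finset α)) (C : Finset α) (z : α) : Finset α :=
  {c ∈ C | {z, c} ∈ E}

theorem pairNeighbors_subset : E.pairNeighbors C z ⊆ C := filter_subset _ _

theorem IsTransversal.mem_of_pair_mem (h : E.IsTransversal C) (hz : z ∉ C)
    (hzc : {z, c} ∈ E) : c ∈ C := by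
  obtain ⟨x, hx⟩ := h _ hzc
  rw [mem_inter, mem_insert, mem_singleton] at hx
  obtain ⟨rfl | rfl, hxC⟩ := hx
  exacts [absurd hxC hz, hxC]

theorem IsTransversal.biUnion_pairNeighbors_subset (h : E.IsTransversal C') (hS : Disjoint S C') :
    S.biUnion (E.pairNeighbors C) ⊆ C' := by
  intro c hc
  obtain ⟨z, hz, hzc⟩ := mem_biUnion.1 hc
  exact h.mem_of_pair_mem (disjoint_left.1 hS hz) (mem_filter.1 hzc).2

/-- An edge meeting `C'` only inside `S` is a pair `{x, y}` with `y ∈ C`. -/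
theorem IsTransversal.sdiff_union_biUnion_pairNeighbors (hC : E.IsTransversal C)
    (hC' : E.IsTransversal C') (hSC : Disjoint S C) (hS : ∀ x ∈ S, ∀ e ∈ E, x ∈ e → e.card = 2) :
    E.IsTransversal ((C' \ S) ∪ S.biUnion (E.pairNeighbors C)) := by
  intro e he
  obtain ⟨x, hx⟩ := hC' e he
  rw [mem_inter] at hx
  by_cases hxS : x ∉ S
  · exact ⟨x, mem_inter.2 ⟨hx.1, mem_union_left _ (mem_sdiff.2 ⟨hx.2, hxS⟩)⟩⟩
  rw [not_not] at hxS
  obtain ⟨y, hy⟩ := hC e he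
  rw [mem_inter] at hy
  have hxy : x ≠ y := fun hxy => disjoint_left.1 hSC hxS (hxy ▸ hy.2)
  have hexy : e = {x, y} :=
    (eq_of_subset_of_card_le (insert_subset hx.1 (singleton_subset_iff.2 hy.1))
      (by rw [hS x hxS e he hx.1, card_pair hxy])).symm
  refine ⟨y, mem_inter.2 ⟨hy.1, mem_union_right _ (mem_biUnion.2 ⟨x, hxS, ?_⟩)⟩⟩
  exact mem_filter.2 ⟨hy.2, hexy ▸ he⟩

theorem card_sdiff_union_biUnion_pairNeighbors_add_card_le (hC' : E.IsTransversal C')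
    (hSC : Disjoint S C)
    (hHall : (S \ C').card ≤ ((S \ C').biUnion (E.pairNeighbors C)).card) :
    ((C' \ S) ∪ S.biUnion (E.pairNeighbors C)).card + S.card ≤
      C'.card + (S.biUnion (E.pairNeighbors C)).card := by
  set N := S.biUnion (E.pairNeighbors C)
  have hNS : Disjoint N S :=
    disjoint_of_subset_left (biUnion_subset.2 fun _ _ => pairNeighbors_subset) hSC.symm
  have hsub : (C' \ S) ∪ N ⊆ (C' \ S) ∪ (N \ C') := by
    intro x hx
    rcases mem_union.1 hx with hx | hx
    · exact mem_union_left _ hx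
    by_cases hxC' : x ∈ C'
    · exact mem_union_left _ (mem_sdiff.2 ⟨hxC', disjoint_left.1 hNS hx⟩)
    · exact mem_union_right _ (mem_sdiff.2 ⟨hx, hxC'⟩)
  have hN' : (S \ C').biUnion (E.pairNeighbors C) ⊆ N ∩ C' :=
    subset_inter (biUnion_subset_biUnion_of_subset_left _ sdiff_subset)
      (hC'.biUnion_pairNeighbors_subset sdiff_disjoint)
  have h1 := (card_le_card hsub).trans (card_union_le _ _)
  have h2 := card_sdiff_add_card_inter C' S
  have h3 := card_sdiff_add_card_inter N C'
  have h4 := card_sdiff_add_card_inter S C'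
  have h5 := card_le_card hN'
  rw [inter_comm C' S] at h2
  omega

noncomputable def pairVerticesOutside (E : Finset (Finset α)) (C : Finset α) : Finset α :=
  {z ∈ E.minTransversals.sup id \ C | ∀ e ∈ E, z ∈ e → e.card = 2}

theorem mem_pairVerticesOutside :
    z ∈ E.pairVerticesOutside C ↔
      z ∈ E.minTransversals.sup id ∧ z ∉ C ∧ ∀ e ∈ E, z ∈ e → e.card = 2 := by
  rw [pairVerticesOutside, mem_filter, mem_sdiff, and_assoc]

theorem disjoint_of_subset_pairVerticesOutside (hS : S ⊆ E.pairVerticesOutside C) :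
    Disjoint S C :=
  disjoint_left.2 fun _ hx => (mem_pairVerticesOutside.1 (hS hx)).2.1

theorem card_le_card_biUnion_pairNeighbors (hC : C ∈ E.minTransversals)
    (hS : S ⊆ E.pairVerticesOutside C) : S.card ≤ (S.biUnion (E.pairNeighbors C)).card := by
  induction S using Finset.strongInduction with
  | H S ih =>
  obtain rfl | ⟨z, hz⟩ := S.eq_empty_or_nonempty
  · simp
  obtain ⟨C', hC', hzC'⟩ := mem_sup.1 (mem_pairVerticesOutside.1 (hS hz)).1
  obtain ⟨hC't, hC'card⟩ := mem_minTransversals.1 hC'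
  have hSC := disjoint_of_subset_pairVerticesOutside hS
  have hssub : S \ C' ⊂ S := ssubset_iff_of_subset sdiff_subset |>.2
    ⟨z, hz, fun h => (mem_sdiff.1 h).2 hzC'⟩
  have hY := (mem_minTransversals.1 hC).1.sdiff_union_biUnion_pairNeighbors hC't hSC
    fun x hx => (mem_pairVerticesOutside.1 (hS hx)).2.2
  have h1 := transversalNumber_le hY
  have h2 := card_sdiff_union_biUnion_pairNeighbors_add_card_le hC't hSC
    (ih _ hssub (sdiff_subset.trans hS))
  omega

/-- Hall's condition for additionally matching `z` into `C ∩ m`. -/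
theorem card_lt_card_inter_union_biUnion_pairNeighbors {m : Finset α}
    (hC : C ∈ E.minTransversals)
    (hmax : ∀ C' ∈ E.minTransversals, (C' ∩ m).card ≤ (C ∩ m).card)
    (hzZ : z ∈ E.minTransversals.sup id) (hzC : z ∉ C) (hzm : z ∈ m)
    (hS : S ⊆ E.pairVerticesOutside C) (hzS : z ∉ S) :
    S.card < ((C ∩ m) ∪ S.biUnion (E.pairNeighbors C)).card := by
  set N := S.biUnion (E.pairNeighbors C)
  by_contra! hle
  have hHall : S.card ≤ N.card := card_le_card_biUnion_pairNeighbors hC hS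
  have hN : (C ∩ m) ∪ N = N :=
    (eq_of_subset_of_card_le subset_union_right (by omega)).symm
  have hmN : C ∩ m ⊆ N := hN ▸ subset_union_left
  rw [hN] at hle
  obtain ⟨C', hC', hzC'⟩ := mem_sup.1 hzZ
  obtain ⟨hC't, hC'card⟩ := mem_minTransversals.1 hC'
  have hSC := disjoint_of_subset_pairVerticesOutside hS
  set Y := (C' \ S) ∪ N
  have hYt : E.IsTransversal Y := (mem_minTransversals.1 hC).1.sdiff_union_biUnion_pairNeighbors
    hC't hSC fun x hx => (mem_pairVerticesOutside.1 (hS hx)).2.2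
  have hYcard : Y.card + S.card ≤ C'.card + N.card :=
    card_sdiff_union_biUnion_pairNeighbors_add_card_le hC't hSC
      (card_le_card_biUnion_pairNeighbors hC (sdiff_subset.trans hS))
  have hY : Y ∈ E.minTransversals :=
    mem_minTransversals.2 ⟨hYt, le_antisymm (by omega) (transversalNumber_le hYt)⟩
  have hzY : insert z (C ∩ m) ⊆ Y ∩ m :=
    insert_subset (mem_inter.2 ⟨mem_union_left _ (mem_sdiff.2 ⟨hzC', hzS⟩), hzm⟩)
      (subset_inter (hmN.trans subset_union_right) inter_subset_right)
  have := card_le_card hzY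
  rw [card_insert_of_notMem fun h => hzC (mem_inter.1 h).1] at this
  have := hmax Y hY
  omega

theorem exists_injOn_of_card_le_card_biUnion {L : Finset α} {t : α → Finset α}
    (h : ∀ S ⊆ L, S.card ≤ (S.biUnion t).card) :
    ∃ f : α → α, Set.InjOn f L ∧ ∀ z ∈ L, f z ∈ t z := by
  have hHall : ∀ s : Finset L, s.card ≤ (s.biUnion fun z => t z).card := fun s => by
    rw [← card_image_of_injective s Subtype.val_injective, ← image_biUnion]
    exact h _ fun _ hx => by
      obtain ⟨y, -, rfl⟩ := mem_image.1 hx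
      exact y.2
  obtain ⟨f, hf, hft⟩ := (all_card_le_biUnion_card_iff_existsInjective' _).1 hHall
  refine ⟨fun z => if hz : z ∈ L then f ⟨z, hz⟩ else z, fun x hx y hy hxy => ?_,
    fun z hz => ?_⟩
  · simp only [mem_coe] at hx hy
    simp only [dif_pos hx, dif_pos hy] at hxy
    exact congrArg Subtype.val (hf hxy)
  · simpa only [dif_pos hz] using hft ⟨z, hz⟩

theorem exists_subset_card_le_of_injOn {L : Finset α} {f : α → α} {g : α → Finset α}
    (hCE : C ⊆ E.sup id) (hf : Set.InjOn f L) (hfC : ∀ z ∈ L, f z ∈ C)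
    (hg : ∀ z ∈ L, g z ∈ E ∧ f z ∈ g z) :
    ∃ T ⊆ E, T.card ≤ C.card ∧ L.image g ⊆ T ∧ C ⊆ T.sup id := by
  choose! p hpE hpc using fun c (hc : c ∈ E.sup id) => mem_sup.1 hc
  set M := L.image f
  have hMC : M ⊆ C := image_subset_iff.2 hfC
  have hM : M.card = L.card := card_image_of_injOn hf
  refine ⟨L.image g ∪ (C \ M).image p, union_subset (image_subset_iff.2 fun z hz => (hg z hz).1)
    (image_subset_iff.2 fun c hc => hpE c (hCE (mem_sdiff.1 hc).1)), ?_, subset_union_left,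
    fun c hc => ?_⟩
  · have h1 := card_union_le (L.image g) ((C \ M).image p)
    have h2 : (L.image g).card ≤ L.card := card_image_le
    have h3 : ((C \ M).image p).card ≤ C.card - M.card :=
      card_sdiff_of_subset hMC ▸ card_image_le
    have h4 := card_le_card hMC
    omega
  · by_cases hcM : c ∈ M
    · obtain ⟨z, hz, rfl⟩ := mem_image.1 hcM
      exact mem_sup.2 ⟨g z, mem_union_left _ (mem_image_of_mem g hz), (hg z hz).2⟩
    · exact mem_sup.2 ⟨p c, mem_union_right _ (mem_image_of_mem p (mem_sdiff.2 ⟨hc, hcM⟩)),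
        hpc c (hCE hc)⟩

theorem exists_subset_card_le_pairVerticesOutside_union (hC : C ∈ E.minTransversals) :
    ∃ T ⊆ E, T.card ≤ E.transversalNumber ∧ E.pairVerticesOutside C ∪ C ⊆ T.sup id := by
  obtain ⟨f, hf, hfN⟩ := exists_injOn_of_card_le_card_biUnion fun S hS =>
    card_le_card_biUnion_pairNeighbors hC hS
  obtain ⟨T, hTE, hTcard, hgT, hCT⟩ := exists_subset_card_le_of_injOn (g := fun z => {z, f z})
    (subset_sup_of_mem_minTransversals hC) hf (fun z hz => pairNeighbors_subset (hfN z hz))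
    fun z hz => ⟨(mem_filter.1 (hfN z hz)).2, mem_insert_of_mem (mem_singleton_self _)⟩
  refine ⟨T, hTE, (mem_minTransversals.1 hC).2 ▸ hTcard, union_subset (fun z hz => ?_) hCT⟩
  exact mem_sup.2 ⟨_, hgT (mem_image_of_mem _ hz), mem_insert_self z _⟩

theorem exists_subset_card_le_pairVerticesOutside_union_of_mem {m : Finset α}
    (hC : C ∈ E.minTransversals)
    (hmax : ∀ C' ∈ E.minTransversals, (C' ∩ m).card ≤ (C ∩ m).card) (hm : m ∈ E)
    (hzZ : z ∈ E.minTransversals.sup id) (hzC : z ∉ C) (hzm : z ∈ m)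
    (hzL : z ∉ E.pairVerticesOutside C) :
    ∃ T ⊆ E, T.card ≤ E.transversalNumber ∧ m ∈ T ∧ E.pairVerticesOutside C ∪ C ⊆ T.sup id := by
  set L := E.pairVerticesOutside C
  set t := Function.update (E.pairNeighbors C) z (C ∩ m)
  have ht : ∀ S ⊆ L, S.biUnion t = S.biUnion (E.pairNeighbors C) := fun S hS =>
    biUnion_congr rfl fun y hy => Function.update_of_ne (ne_of_mem_of_not_mem (hS hy) hzL) _ _
  have hHall : ∀ S ⊆ insert z L, S.card ≤ (S.biUnion t).card := by
    intro S hS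
    by_cases hzS : z ∈ S
    · have hS' : S.erase z ⊆ L := subset_insert_iff.1 hS
      have htz : t z = C ∩ m := Function.update_self ..
      rw [← insert_erase hzS, biUnion_insert, htz, ht _ hS',
        card_insert_of_notMem (notMem_erase z S)]
      exact card_lt_card_inter_union_biUnion_pairNeighbors hC hmax hzZ hzC hzm hS'
        (notMem_erase z S)
    · have hS' : S ⊆ L := (subset_insert_iff_of_notMem hzS).1 hS
      rw [ht S hS']
      exact card_le_card_biUnion_pairNeighbors hC hS'
  obtain ⟨f, hf, hft⟩ := exists_injOn_of_card_le_card_biUnion hHall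
  set g := Function.update (fun y => ({y, f y} : Finset α)) z m
  have hg : ∀ y ∈ insert z L, f y ∈ C ∧ g y ∈ E ∧ f y ∈ g y := by
    intro y hy
    have hfy := hft y hy
    rcases eq_or_ne y z with rfl | hyz
    · simp only [t, g, Function.update_self, mem_inter] at hfy ⊢
      exact ⟨hfy.1, hm, hfy.2⟩
    · simp only [t, g, Function.update_of_ne hyz, pairNeighbors, mem_filter] at hfy ⊢
      exact ⟨hfy.1, hfy.2, mem_insert_of_mem (mem_singleton_self _)⟩
  obtain ⟨T, hTE, hTcard, hgT, hCT⟩ := exists_subset_card_le_of_injOn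
    (subset_sup_of_mem_minTransversals hC) hf (fun y hy => (hg y hy).1) fun y hy => (hg y hy).2
  have hmT : m ∈ T := hgT (mem_image.2 ⟨z, mem_insert_self z L, Function.update_self ..⟩)
  refine ⟨T, hTE, (mem_minTransversals.1 hC).2 ▸ hTcard, hmT, union_subset (fun y hy => ?_) hCT⟩
  have hyz : y ≠ z := ne_of_mem_of_not_mem hy hzL
  refine mem_sup.2 ⟨g y, hgT (mem_image_of_mem g (mem_insert_of_mem hy)), ?_⟩
  simp only [g, Function.update_of_ne hyz, id, mem_insert_self]

theorem mem_of_notMem_pairVerticesOutside {m₀ : Finset α} (hE : ∀ e ∈ E, e ≠ m₀ → e.card = 2)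
    (hzZ : z ∈ E.minTransversals.sup id) (hzC : z ∉ C) (hzL : z ∉ E.pairVerticesOutside C) :
    m₀ ∈ E ∧ z ∈ m₀ := by
  simp only [mem_pairVerticesOutside, hzZ, hzC, not_false_eq_true, true_and,
    not_forall] at hzL
  obtain ⟨e, he, hze, he2⟩ := hzL
  obtain rfl : e = m₀ := by_contra fun h => he2 (hE e he h)
  exact ⟨he, hze⟩

theorem exists_subset_card_le_sup_minTransversals {m₀ : Finset α}
    (hE : ∀ e ∈ E, e ≠ m₀ → e.card = 2) :
    ∃ T ⊆ E, T.card ≤ E.transversalNumber ∧ E.minTransversals.sup id ⊆ T.sup id := by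
  obtain hempty | hne := E.minTransversals.eq_empty_or_nonempty
  · exact ⟨∅, empty_subset E, Nat.zero_le _, by simp [hempty]⟩
  obtain ⟨C, hC, hmax⟩ := exists_max_image _ (fun C => (C ∩ m₀).card) hne
  by_cases hZ : E.minTransversals.sup id ⊆ E.pairVerticesOutside C ∪ C
  · obtain ⟨T, hTE, hTcard, hT⟩ := exists_subset_card_le_pairVerticesOutside_union hC
    exact ⟨T, hTE, hTcard, hZ.trans hT⟩
  obtain ⟨z, hzZ, hz⟩ := not_subset.1 hZ
  rw [mem_union, not_or] at hz
  obtain ⟨hm₀, hzm₀⟩ := mem_of_notMem_pairVerticesOutside hE hzZ hz.2 hz.1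
  obtain ⟨T, hTE, hTcard, hm₀T, hT⟩ := exists_subset_card_le_pairVerticesOutside_union_of_mem hC
    hmax hm₀ hzZ hz.2 hzm₀ hz.1
  refine ⟨T, hTE, hTcard, fun y hy => ?_⟩
  by_cases hy' : y ∈ E.pairVerticesOutside C ∪ C
  · exact hT hy'
  rw [mem_union, not_or] at hy'
  exact mem_sup.2 ⟨m₀, hm₀T, (mem_of_notMem_pairVerticesOutside hE hy hy'.2 hy'.1).2⟩

theorem card_sup_minTransversals_le_maxUnionCard {m₀ : Finset α}
    (hE : ∀ e ∈ E, e ≠ m₀ → e.card = 2) :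
    (E.minTransversals.sup id).card ≤ E.maxUnionCard E.transversalNumber := by
  obtain hempty | ⟨C, hC⟩ := E.minTransversals.eq_empty_or_nonempty
  · simp [hempty]
  obtain ⟨T, hTE, hTcard, hZT⟩ := exists_subset_card_le_sup_minTransversals hE
  exact (card_le_card hZT).trans
    (card_sup_le_maxUnionCard_of_card_le hTE hTcard (transversalNumber_le_card hC))

theorem card_minTransversals_mul_factorial_le {m₀ : Finset α}
    (hE : ∀ e ∈ E, e ≠ m₀ → e.card = 2) :
    E.minTransversals.card * E.transversalNumber ! ≤
      ∏ i ∈ Icc 1 E.transversalNumber, E.maxUnionCard i := by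
  induction hτ : E.transversalNumber generalizing E with
  | zero =>
    have hsub : E.minTransversals ⊆ {∅} := fun C hC => by
      rw [mem_singleton, ← card_eq_zero, (mem_minTransversals.1 hC).2, hτ]
    simpa using card_le_card hsub
  | succ r ih =>
    set Z := E.minTransversals.sup id
    have hvertex : ∀ v ∈ Z, {C ∈ E.minTransversals | v ∈ C}.card * r ! ≤
        ∏ i ∈ Icc 1 r, E.maxUnionCard i := by
      intro v hv
      obtain ⟨C, hC, hvC⟩ := mem_sup.1 hv
      have hτ' : {e ∈ E | v ∉ e}.transversalNumber = r := by
        have := transversalNumber_filter_notMem_add_one hC hvC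
        omega
      rw [card_filter_mem_minTransversals hC hvC]
      exact (ih (fun e he => hE e (mem_filter.1 he).1) hτ').trans
        (prod_le_prod' fun i _ => maxUnionCard_mono (filter_subset _ E) i)
    calc E.minTransversals.card * (r + 1)!
        = (∑ v ∈ Z, {C ∈ E.minTransversals | v ∈ C}.card) * r ! := by
          rw [← card_minTransversals_mul_transversalNumber, hτ, Nat.factorial_succ]
          ring
      _ ≤ Z.card * ∏ i ∈ Icc 1 r, E.maxUnionCard i := by
          rw [sum_mul, ← smul_eq_mul, ← sum_const]
          exact sum_le_sum hvertex
      _ ≤ E.maxUnionCard (r + 1) * ∏ i ∈ Icc 1 r, E.maxUnionCard i :=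
          Nat.mul_le_mul_right _ (hτ ▸ card_sup_minTransversals_le_maxUnionCard hE)
      _ = ∏ i ∈ Icc 1 (r + 1), E.maxUnionCard i := by
          rw [prod_Icc_succ_top (Nat.le_add_left 1 r), mul_comm]

end Finset

namespace SC

variable {α : Type*} [DecidableEq α] {K : SC α} {F C : Finset α}

theorem mem_minNonFaces :
    F ∈ K.minNonFaces ↔ F ⊆ K.verts ∧ F ∉ K.faces ∧ ∀ G ⊆ F, G ≠ F → G ∈ K.faces := by
  simp [minNonFaces]

theorem mem_faces_iff (hF : F ⊆ K.verts) : F ∈ K.faces ↔ ∀ e ∈ K.minNonFaces, ¬ e ⊆ F := by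
  refine ⟨fun hFK e he heF => (mem_minNonFaces.1 he).2.1 (K.down_closed F hFK e heF), fun h => ?_⟩
  by_contra hFK
  obtain ⟨G, hG, hGmin⟩ := exists_min_image {G ∈ F.powerset | G ∉ K.faces} card
    ⟨F, mem_filter.2 ⟨mem_powerset_self F, hFK⟩⟩
  obtain ⟨hGF, hGK⟩ := mem_filter.1 hG
  refine h G (mem_minNonFaces.2 ⟨(mem_powerset.1 hGF).trans hF, hGK, fun G' hG'G hne => ?_⟩)
    (mem_powerset.1 hGF)
  by_contra hG'K
  have := hGmin G' (mem_filter.2 ⟨mem_powerset.2 (hG'G.trans (mem_powerset.1 hGF)), hG'K⟩)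
  exact this.not_gt (card_lt_card (hG'G.ssubset_of_ne hne))

theorem isTransversal_minNonFaces_iff :
    K.minNonFaces.IsTransversal C ↔ K.verts \ C ∈ K.faces := by
  rw [mem_faces_iff sdiff_subset]
  refine forall₂_congr fun e he => ?_
  rw [subset_sdiff, ← not_disjoint_iff_nonempty_inter]
  simp [(mem_minNonFaces.1 he).1]

theorem card_le_dimP1 (hF : F ∈ K.faces) : F.card ≤ K.dimP1 := le_sup (f := card) hF

theorem dimP1_le_card_verts : K.dimP1 ≤ K.verts.card :=
  Finset.sup_le fun F hF => card_le_card (K.subset_verts F hF)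

theorem subset_verts_of_mem_minTransversals (hC : C ∈ K.minNonFaces.minTransversals) :
    C ⊆ K.verts :=
  (subset_sup_of_mem_minTransversals hC).trans
    (Finset.sup_le fun _ he => (mem_minNonFaces.1 he).1)

theorem transversalNumber_minNonFaces (hK : K.faces.Nonempty) :
    K.minNonFaces.transversalNumber = K.verts.card - K.dimP1 := by
  obtain ⟨F, hF, hFcard⟩ := exists_mem_eq_sup K.faces hK card
  have hFv := K.subset_verts F hF
  have hFt : K.minNonFaces.IsTransversal (K.verts \ F) := by
    rwa [isTransversal_minNonFaces_iff, Finset.sdiff_sdiff_eq_self hFv]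
  obtain ⟨C, hC⟩ := minTransversals_nonempty hFt
  have hCv := subset_verts_of_mem_minTransversals hC
  obtain ⟨hCt, hCcard⟩ := mem_minTransversals.1 hC
  have hle := transversalNumber_le hFt
  have hge := card_le_dimP1 (isTransversal_minNonFaces_iff.1 hCt)
  rw [card_sdiff_of_subset hFv] at hle
  rw [card_sdiff_of_subset hCv] at hge
  have hd : K.dimP1 = F.card := hFcard
  have := card_le_card hCv
  omega

theorem card_minTransversals_minNonFaces (hK : K.faces.Nonempty) :
    K.minNonFaces.minTransversals.card = K.fCard K.dimP1 := by
  have hτ := transversalNumber_minNonFaces hK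
  have hd := K.dimP1_le_card_verts
  refine card_nbij' (K.verts \ ·) (K.verts \ ·) (fun C hC => ?_) (fun F hF => ?_)
    (fun C hC => Finset.sdiff_sdiff_eq_self (subset_verts_of_mem_minTransversals hC))
    (fun F hF => Finset.sdiff_sdiff_eq_self (K.subset_verts F (mem_filter.1 hF).1))
  · have hCv := subset_verts_of_mem_minTransversals hC
    obtain ⟨hCt, hCcard⟩ := mem_minTransversals.1 hC
    refine mem_filter.2 ⟨isTransversal_minNonFaces_iff.1 hCt, ?_⟩
    rw [card_sdiff_of_subset hCv]
    omega
  · obtain ⟨hFK, hFcard⟩ := mem_filter.1 hF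
    have hFv := K.subset_verts F hFK
    refine mem_minTransversals.2 ⟨?_, ?_⟩
    · rwa [isTransversal_minNonFaces_iff, Finset.sdiff_sdiff_eq_self hFv]
    · rw [card_sdiff_of_subset hFv]
      omega

end SC

open SC in
/-- A simplicial complex of dimension `d-1` on `n` vertices all of whose minimal non-faces
have exactly two vertices, except possibly one, satisfies the Taylor upper bound. -/
theorem taylorUB_of_almost_quadratic {α : Type*} [DecidableEq α] (K : SC α)
    (h : ∃ m₀ : Finset α, ∀ F ∈ K.minNonFaces, F ≠ m₀ → F.card = 2) :
    TaylorUB K := by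
  obtain ⟨m₀, hm₀⟩ := h
  rcases K.faces.eq_empty_or_nonempty with hK | hK
  · simp only [TaylorUB, fCard, hK, filter_empty, card_empty, Nat.cast_zero, taylorUBval]
    positivity
  rw [TaylorUB, taylorUBval, ← card_minTransversals_minNonFaces hK,
    ← transversalNumber_minNonFaces hK, le_div_iff₀ (by positivity)]
  -- `K.MT` is `K.minNonFaces.maxUnionCard` by definition.
  exact_mod_cast card_minTransversals_mul_factorial_le hm₀
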